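/- Let M = [[A, B],[Bᵀ, D]] be symmetric with the m-th largest eigenvalue λ_m(M) satisfying λ_m(M) > ρ(D), and let u_1,…,u_m be orthonormal eigenvectors for the m largest eigenvalues, partitioned as u_i = (u_{i,1}, u_{i,2}). If additionally (λ_m(M) − ρ(D)) > 0 and ‖B‖ < s, then ‖u_{i,2}‖₂ < s/(λ_m(M) − ρ(D)) for every i ≤ m, and hence ‖U₂‖_F < √m · s/(λ_m(M) − ρ(D)) where U₂ = [u_{1,2} … u_{m,2}]. -/

import Mathlib

open Matrix

/-- Spectral radius of a real symmetric matrix: the largest absolute value of an eigenvalue. -/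
noncomputable def specRad {ι : Type*} [Fintype ι] [DecidableEq ι]
    {D : Matrix ι ι ℝ} (hD : D.IsHermitian) : ℝ :=
  ⨆ i, |hD.eigenvalues i|

/-- Euclidean (ℓ²) norm of a real vector. -/
noncomputable def vecNorm {ι : Type*} [Fintype ι] (v : ι → ℝ) : ℝ :=
  Real.sqrt (∑ i, (v i) ^ 2)

/-- Frobenius norm of a real matrix. -/
noncomputable def frob {ι κ : Type*} [Fintype ι] [Fintype κ] (A : Matrix ι κ ℝ) : ℝ :=
  Real.sqrt (∑ i, ∑ j, (A i j) ^ 2)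

/-- ℓ²→ℓ² operator norm (largest singular value) of a real matrix. -/
noncomputable def opNorm {ι κ : Type*} [Fintype ι] [Fintype κ] [DecidableEq ι] [DecidableEq κ]
    (A : Matrix κ ι ℝ) : ℝ :=
  ‖LinearMap.toContinuousLinearMap
      (Matrix.toLin (PiLp.basisFun 2 ℝ ι) (PiLp.basisFun 2 ℝ κ) A)‖

/-- The `j`-th largest eigenvalue (1-indexed, with multiplicity) of a real symmetric matrix. -/
noncomputable def kthLargestEig {ι : Type*} [Fintype ι] [DecidableEq ι]
    {M : Matrix ι ι ℝ} (hM : M.IsHermitian) (j : ℕ) : ℝ :=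
  (List.insertionSort (· ≥ ·) (Finset.univ.toList.map hM.eigenvalues)).getD (j - 1) 0

/-!
The lower block row of the eigen-equation reads `(μ - D) u₂ = Bᵀ u₁`. By the spectral theorem
the `ℓ²` operator norm of the symmetric matrix `D` is at most `ρ(D)`, so the left side has norm
at least `(μ - ρ(D)) ‖u₂‖`, while the right side has norm at most `‖B‖ ‖u₁‖ ≤ ‖B‖` because `u` is
a unit vector. Summing the squares of these column bounds gives the Frobenius bound.
-/

open scoped Matrix.Norms.L2Operator

section

variable {ι κ : Type*} [Fintype ι] [Fintype κ]

lemma vecNorm_eq_norm_toLp (v : ι → ℝ) : vecNorm v = ‖WithLp.toLp 2 v‖ := by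
  simp [vecNorm, EuclideanSpace.norm_eq]

lemma opNorm_eq_l2_opNorm [DecidableEq ι] [DecidableEq κ] (A : Matrix κ ι ℝ) :
    opNorm A = ‖A‖ := rfl

lemma l2_opNorm_transpose [DecidableEq ι] [DecidableEq κ] (A : Matrix κ ι ℝ) :
    ‖Aᵀ‖ = ‖A‖ := by
  rw [← conjTranspose_eq_transpose_of_trivial, l2_opNorm_conjTranspose]

lemma specRad_nonneg [DecidableEq ι] {D : Matrix ι ι ℝ} (hD : D.IsHermitian) :
    0 ≤ specRad hD :=
  Real.iSup_nonneg fun _ => abs_nonneg _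

lemma abs_eigenvalues_le_specRad [DecidableEq ι] {D : Matrix ι ι ℝ} (hD : D.IsHermitian)
    (i : ι) : |hD.eigenvalues i| ≤ specRad hD :=
  le_ciSup (f := fun i => |hD.eigenvalues i|) (Set.finite_range _).bddAbove i

lemma l2_opNorm_le_specRad [DecidableEq ι] {D : Matrix ι ι ℝ} (hD : D.IsHermitian) :
    ‖D‖ ≤ specRad hD := by
  conv_lhs => rw [hD.spectral_theorem]
  rw [Unitary.conjStarAlgAut_apply, ← Unitary.coe_star, CStarRing.norm_mul_coe_unitary,
    CStarRing.norm_coe_unitary_mul, l2_opNorm_diagonal,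
    pi_norm_le_iff_of_nonneg (specRad_nonneg hD)]
  exact fun i => abs_eigenvalues_le_specRad hD i

lemma norm_toLp_mulVec_le_specRad_mul [DecidableEq ι] {D : Matrix ι ι ℝ}
    (hD : D.IsHermitian) (v : ι → ℝ) :
    ‖WithLp.toLp 2 (D *ᵥ v)‖ ≤ specRad hD * ‖WithLp.toLp 2 v‖ :=
  (D.l2_opNorm_mulVec (WithLp.toLp 2 v)).trans <|
    mul_le_mul_of_nonneg_right (l2_opNorm_le_specRad hD) (norm_nonneg _)

lemma norm_toLp_comp_inl_le (v : ι ⊕ κ → ℝ) :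
    ‖WithLp.toLp 2 (v ∘ Sum.inl)‖ ≤ ‖WithLp.toLp 2 v‖ := by
  rw [← sq_le_sq₀ (norm_nonneg _) (norm_nonneg _), EuclideanSpace.norm_sq_eq,
    EuclideanSpace.norm_sq_eq, Fintype.sum_sum_type]
  exact le_add_of_nonneg_right (by positivity)

theorem norm_inr_le_of_fromBlocks_mulVec_eq_smul [DecidableEq ι] [DecidableEq κ]
    {A : Matrix ι ι ℝ} {B : Matrix ι κ ℝ} {C : Matrix κ ι ℝ} {D : Matrix κ κ ℝ}
    (hD : D.IsHermitian) {v : ι ⊕ κ → ℝ} {μ : ℝ} (hv : fromBlocks A B C D *ᵥ v = μ • v)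
    (hμ : specRad hD ≤ μ) :
    (μ - specRad hD) * ‖WithLp.toLp 2 (v ∘ Sum.inr)‖ ≤ ‖C‖ * ‖WithLp.toLp 2 (v ∘ Sum.inl)‖ := by
  have hlower : C *ᵥ (v ∘ Sum.inl) = μ • (v ∘ Sum.inr) - D *ᵥ (v ∘ Sum.inr) := by
    rw [eq_sub_iff_add_eq]
    simpa [fromBlocks_mulVec, Pi.smul_comp] using congrArg (· ∘ Sum.inr) hv
  have hμ0 : 0 ≤ μ := (specRad_nonneg hD).trans hμ
  calc (μ - specRad hD) * ‖WithLp.toLp 2 (v ∘ Sum.inr)‖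
      = ‖WithLp.toLp 2 (μ • (v ∘ Sum.inr))‖ - specRad hD * ‖WithLp.toLp 2 (v ∘ Sum.inr)‖ := by
        rw [WithLp.toLp_smul, norm_smul, Real.norm_of_nonneg hμ0]; ring
    _ ≤ ‖WithLp.toLp 2 (μ • (v ∘ Sum.inr))‖ - ‖WithLp.toLp 2 (D *ᵥ (v ∘ Sum.inr))‖ :=
        sub_le_sub_left (norm_toLp_mulVec_le_specRad_mul hD _) _
    _ ≤ ‖WithLp.toLp 2 (C *ᵥ (v ∘ Sum.inl))‖ := by
        rw [hlower, WithLp.toLp_sub]; exact norm_sub_norm_le _ _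
    _ ≤ ‖C‖ * ‖WithLp.toLp 2 (v ∘ Sum.inl)‖ :=
        C.l2_opNorm_mulVec (WithLp.toLp 2 (v ∘ Sum.inl))

lemma frob_lt_sqrt_card_mul [Nonempty κ] (M : Matrix ι κ ℝ) {c : ℝ}
    (hM : ∀ j, vecNorm (fun i => M i j) < c) : frob M < Real.sqrt (Fintype.card κ) * c := by
  obtain ⟨j₀⟩ := ‹Nonempty κ›
  have hc : 0 ≤ c := (Real.sqrt_nonneg _).trans (hM j₀).le
  have hsq : ∀ j, ∑ i, M i j ^ 2 < c ^ 2 := fun j => by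
    have := hM j
    rwa [vecNorm, Real.sqrt_lt (by positivity) hc] at this
  calc frob M = Real.sqrt (∑ j, ∑ i, M i j ^ 2) := by rw [frob, Finset.sum_comm]
    _ < Real.sqrt (Fintype.card κ * c ^ 2) := by
        gcongr
        calc ∑ j, ∑ i, M i j ^ 2 < ∑ _j : κ, c ^ 2 :=
              Finset.sum_lt_sum_of_nonempty Finset.univ_nonempty fun j _ => hsq j
          _ = Fintype.card κ * c ^ 2 := by simp
    _ = Real.sqrt (Fintype.card κ) * c := by
        rw [Real.sqrt_mul (Nat.cast_nonneg _), Real.sqrt_sq hc]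

end

theorem stmt12_general {m k : ℕ} (hm : 0 < m) (s : ℝ)
    (A : Matrix (Fin m) (Fin m) ℝ) (B : Matrix (Fin m) (Fin k) ℝ)
    (D : Matrix (Fin k) (Fin k) ℝ) (hD : D.IsHermitian)
    (hM : (Matrix.fromBlocks A B Bᵀ D).IsHermitian)
    (u : Fin m → (Fin m ⊕ Fin k → ℝ)) (μ : Fin m → ℝ)
    (horth : ∀ i j, (∑ x, u i x * u j x) = if i = j then (1 : ℝ) else 0)
    (heig : ∀ i, (Matrix.fromBlocks A B Bᵀ D).mulVec (u i) = μ i • u i)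
    (hμ : ∀ i, kthLargestEig hM m ≤ μ i)
    (hsep : specRad hD < kthLargestEig hM m)
    (hB : opNorm B < s) :
    (∀ i, vecNorm (fun j : Fin k => u i (Sum.inr j)) <
        s / (kthLargestEig hM m - specRad hD)) ∧
      frob (Matrix.of fun (j : Fin k) (i : Fin m) => u i (Sum.inr j)) <
        Real.sqrt m * s / (kthLargestEig hM m - specRad hD) := by
  have hcol : ∀ i, vecNorm (fun j : Fin k => u i (Sum.inr j)) <
      s / (kthLargestEig hM m - specRad hD) := by
    intro i
    have hunit : ‖WithLp.toLp 2 (u i)‖ = 1 := by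
      rw [← vecNorm_eq_norm_toLp, vecNorm]
      simp [sq, horth i i]
    rw [vecNorm_eq_norm_toLp, lt_div_iff₀' (sub_pos.2 hsep)]
    calc (kthLargestEig hM m - specRad hD) * ‖WithLp.toLp 2 (u i ∘ Sum.inr)‖
        ≤ (μ i - specRad hD) * ‖WithLp.toLp 2 (u i ∘ Sum.inr)‖ := by gcongr; exact hμ i
      _ ≤ ‖Bᵀ‖ * ‖WithLp.toLp 2 (u i ∘ Sum.inl)‖ :=
        norm_inr_le_of_fromBlocks_mulVec_eq_smul hD (heig i) (hsep.le.trans (hμ i))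
      _ ≤ ‖B‖ * 1 := by
        rw [l2_opNorm_transpose]
        gcongr
        exact hunit ▸ norm_toLp_comp_inl_le (u i)
      _ < s := by rwa [mul_one, ← opNorm_eq_l2_opNorm]
  have : Nonempty (Fin m) := Fin.pos_iff_nonempty.mp hm
  refine ⟨hcol, ?_⟩
  have hfrob :=
    frob_lt_sqrt_card_mul (Matrix.of fun (j : Fin k) (i : Fin m) => u i (Sum.inr j)) hcol
  rwa [Fintype.card_fin, ← mul_div_assoc] at hfrob

/-- Let `M = [[A, B], [Bᵀ, D]]` be symmetric with `λ_m(M) > ρ(D)`, and let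
`u_1, …, u_m` be orthonormal eigenvectors for the `m` largest eigenvalues (so each eigenvalue
`μ i` is at least `λ_m(M)`), partitioned as `u_i = (u_{i,1}, u_{i,2})`. If `‖B‖ < s`, then
`‖u_{i,2}‖₂ < s / (λ_m(M) - ρ(D))` for every `i`, and hence
`‖U₂‖_F < √m · s / (λ_m(M) - ρ(D))` where `U₂ = [u_{1,2} … u_{m,2}]`. -/
theorem stmt12 {m k : ℕ} (hm : 0 < m) (s : ℝ)
    (A : Matrix (Fin m) (Fin m) ℝ) (B : Matrix (Fin m) (Fin k) ℝ)
    (D : Matrix (Fin k) (Fin k) ℝ) (hA : A.IsHermitian) (hD : D.IsHermitian)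
    (hM : (Matrix.fromBlocks A B Bᵀ D).IsHermitian)
    (u : Fin m → (Fin m ⊕ Fin k → ℝ)) (μ : Fin m → ℝ)
    (horth : ∀ i j, (∑ x, u i x * u j x) = if i = j then (1 : ℝ) else 0)
    (heig : ∀ i, (Matrix.fromBlocks A B Bᵀ D).mulVec (u i) = μ i • u i)
    (hμ : ∀ i, kthLargestEig hM m ≤ μ i)
    (hsep : specRad hD < kthLargestEig hM m)
    (hB : opNorm B < s) :
    (∀ i, vecNorm (fun j : Fin k => u i (Sum.inr j)) <
        s / (kthLargestEig hM m - specRad hD)) ∧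
      frob (Matrix.of fun (j : Fin k) (i : Fin m) => u i (Sum.inr j)) <
        Real.sqrt m * s / (kthLargestEig hM m - specRad hD) :=
  stmt12_general hm s A B D hD hM u μ horth heig hμ hsep hB
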